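/- arXiv:1807.02513 — 4 statements merged into one kernel-verified Lean document; each statement's English description precedes it below -/
import Mathlib

section
/- Let T ∈ ℝ^{n_1×⋯×n_d} be a tensor admitting a TR-representation with TR-ranks (r_0, r_1, …, r_d), r_d = r_0. Then for every k with 1 ≤ k ≤ d−1, the matrix rank of the k-th unfolding matrix T_⟨k⟩ satisfies rank(T_⟨k⟩) ≤ r_0 · r_k. -/
/-- Cyclic successor on `Fin d`. -/
def finSucc {d : ℕ} (k : Fin d) : Fin d := ⟨(k.val + 1) % d, Nat.mod_lt _ k.pos⟩

/-- Value of the tensor-ring contraction of cores `G` at the multi-index `i`. -/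
def trVal {d : ℕ} (n ρ : Fin d → ℕ)
    (G : ∀ k : Fin d, Fin (n k) → Matrix (Fin (ρ k)) (Fin (ρ (finSucc k))) ℝ)
    (i : ∀ k : Fin d, Fin (n k)) : ℝ :=
  ∑ α : ∀ k : Fin d, Fin (ρ k), ∏ k : Fin d, G k (i k) (α k) (α (finSucc k))

/-- `(ρ 0, …, ρ (d-1), ρ 0)` is a TR-rank of `T`. -/
def IsTRRank {d : ℕ} (n ρ : Fin d → ℕ) (T : (∀ k : Fin d, Fin (n k)) → ℝ) : Prop :=
  ∃ G : ∀ k : Fin d, Fin (n k) → Matrix (Fin (ρ k)) (Fin (ρ (finSucc k))) ℝ,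
    ∀ i, T i = trVal n ρ G i

/-- The `k`-th unfolding matrix of a tensor. -/
def unfold {d : ℕ} (n : Fin d → ℕ) (T : (∀ k : Fin d, Fin (n k)) → ℝ) (k : ℕ) :
    Matrix (∀ j : {j : Fin d // j.val < k}, Fin (n j.val))
      (∀ j : {j : Fin d // ¬ j.val < k}, Fin (n j.val)) ℝ :=
  Matrix.of fun a b => T (fun j => if h : j.val < k then a ⟨j, h⟩ else b ⟨j, h⟩)

/-!
Cut the ring of cores at the bonds `0` and `k`. Splitting the bond indices `α` of a summand of
`trVal` into those of the left arc `j < k` and those of the right arc `j ≥ k`, the summand is a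
product of a left factor, depending on the left indices `a` and on `α` only through the left bonds
and `α k`, and a right factor, depending on `b`, the right bonds and `α 0`. Grouping the left bonds
by `α 0` and the right ones by `α k` writes `T_⟨k⟩` as a product of an `_ × (r₀ r_k)` matrix and an
`(r₀ r_k) × _` matrix.
-/

open Finset in
theorem Matrix.rank_le_card_mul_card_of_eq_sum_sum {R m n U V X Y : Type*} [CommRing R]
    [StrongRankCondition R] [Fintype n] [Fintype U] [Fintype V] [Fintype X] [Fintype Y]
    (M : Matrix m n R) (πU : U → X) (πV : V → Y) (F : m → U → Y → R) (H : n → V → X → R)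
    (hM : ∀ a b, M a b = ∑ u, ∑ v, F a u (πV v) * H b v (πU u)) :
    M.rank ≤ Fintype.card X * Fintype.card Y := by
  classical
  let A : Matrix m (X × Y) R := of fun a p => ∑ u with πU u = p.1, F a u p.2
  let B : Matrix (X × Y) n R := of fun p b => ∑ v with πV v = p.2, H b v p.1
  have hAB : M = A * B := by
    ext a b
    rw [hM, mul_apply, Fintype.sum_prod_type, ← sum_fiberwise univ πU]
    refine sum_congr rfl fun x _ => ?_
    simp_rw [← sum_fiberwise univ πV (fun v => F _ _ _ * _)]
    rw [sum_comm]
    refine sum_congr rfl fun y _ => ?_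
    simp only [A, B, of_apply, sum_mul_sum]
    refine sum_congr rfl fun u hu => sum_congr rfl fun v hv => ?_
    rw [(mem_filter.1 hu).2, (mem_filter.1 hv).2]
  calc M.rank ≤ A.rank := hAB ▸ rank_mul_le_left A B
    _ ≤ Fintype.card (X × Y) := rank_le_card_width A
    _ = Fintype.card X * Fintype.card Y := Fintype.card_prod X Y

section TensorRing

variable {d : ℕ} {n ρ : Fin d → ℕ} {k : ℕ}

theorem finSucc_eq_of_lt_of_not_lt (hkd : k < d) {j : Fin d} (hj : j.val < k)
    (h : ¬ (finSucc j).val < k) : finSucc j = ⟨k, hkd⟩ := by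
  have hm : (j.val + 1) % d = j.val + 1 := Nat.mod_eq_of_lt (by omega)
  ext
  simp only [finSucc, hm] at h ⊢
  omega

theorem finSucc_eq_zero_of_not_lt_of_lt {j : Fin d} (hj : ¬ j.val < k)
    (h : (finSucc j).val < k) : finSucc j = ⟨0, j.pos⟩ := by
  ext
  simp only [finSucc] at h ⊢
  rcases Nat.lt_or_ge (j.val + 1) d with hlt | hge
  · rw [Nat.mod_eq_of_lt hlt] at h
    omega
  · rw [show j.val + 1 = d by omega, Nat.mod_self]

theorem subtype_pi_apply_eq_cast {p : Fin d → Prop} (v : ∀ i : {j : Fin d // p j}, Fin (ρ i.val))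
    {m m' : Fin d} (h : m = m') (hm : p m) (hm' : p m') :
    v ⟨m, hm⟩ = Fin.cast (congrArg ρ h).symm (v ⟨m', hm'⟩) := by
  subst h; rfl

variable (G : ∀ i : Fin d, Fin (n i) → Matrix (Fin (ρ i)) (Fin (ρ (finSucc i))) ℝ)

def trLeftArc (hkd : k < d) (a : ∀ j : {j : Fin d // j.val < k}, Fin (n j.val))
    (u : ∀ j : {j : Fin d // j.val < k}, Fin (ρ j.val)) (y : Fin (ρ ⟨k, hkd⟩)) : ℝ :=
  ∏ j : {j : Fin d // j.val < k}, G j (a j) (u j)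
    (if h : (finSucc j.val).val < k then u ⟨finSucc j.val, h⟩
     else Fin.cast (congrArg ρ (finSucc_eq_of_lt_of_not_lt hkd j.2 h)).symm y)

def trRightArc (hkd : k < d) (b : ∀ j : {j : Fin d // ¬ j.val < k}, Fin (n j.val))
    (v : ∀ j : {j : Fin d // ¬ j.val < k}, Fin (ρ j.val)) (x : Fin (ρ ⟨0, by omega⟩)) : ℝ :=
  ∏ j : {j : Fin d // ¬ j.val < k}, G j (b j) (v j)
    (if h : (finSucc j.val).val < k then
      Fin.cast (congrArg ρ (finSucc_eq_zero_of_not_lt_of_lt j.2 h)).symm x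
     else v ⟨finSucc j.val, h⟩)

theorem trVal_eq_sum_trLeftArc_mul_trRightArc (hk : 0 < k) (hkd : k < d)
    (a : ∀ j : {j : Fin d // j.val < k}, Fin (n j.val))
    (b : ∀ j : {j : Fin d // ¬ j.val < k}, Fin (n j.val)) :
    trVal n ρ G (fun j => if h : j.val < k then a ⟨j, h⟩ else b ⟨j, h⟩) =
      ∑ u, ∑ v, trLeftArc G hkd a u (v ⟨⟨k, hkd⟩, lt_irrefl k⟩) *
        trRightArc G hkd b v (u ⟨⟨0, by omega⟩, hk⟩) := by
  rw [trVal, ← Equiv.sum_comp (Equiv.piEquivPiSubtypeProd (fun j : Fin d => j.val < k)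
    (fun j => Fin (ρ j))).symm, Fintype.sum_prod_type]
  refine Finset.sum_congr rfl fun u _ => Finset.sum_congr rfl fun v _ => ?_
  rw [← Fintype.prod_subtype_mul_prod_subtype (fun j : Fin d => j.val < k), trLeftArc, trRightArc]
  congr 1
  · refine Finset.prod_congr rfl fun j _ => ?_
    simp only [Equiv.piEquivPiSubtypeProd_symm_apply, dif_pos j.2]
    congr 1
    by_cases h : (finSucc j.val).val < k
    · rw [dif_pos h, dif_pos h]
    · rw [dif_neg h, dif_neg h]
      exact subtype_pi_apply_eq_cast v (finSucc_eq_of_lt_of_not_lt hkd j.2 h) h (lt_irrefl k)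
  · refine Finset.prod_congr rfl fun j _ => ?_
    simp only [Equiv.piEquivPiSubtypeProd_symm_apply, dif_neg j.2]
    congr 1
    by_cases h : (finSucc j.val).val < k
    · rw [dif_pos h, dif_pos h]
      exact subtype_pi_apply_eq_cast u (finSucc_eq_zero_of_not_lt_of_lt j.2 h) h hk
    · rw [dif_neg h, dif_neg h]

end TensorRing

theorem tr_rank_unfolding_le {d : ℕ} (n ρ : Fin d → ℕ)
    (T : (∀ k : Fin d, Fin (n k)) → ℝ) (hT : IsTRRank n ρ T)
    (k : ℕ) (hk1 : 1 ≤ k) (hk2 : k ≤ d - 1) :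
    (unfold n T k).rank ≤ ρ ⟨0, by omega⟩ * ρ ⟨k, by omega⟩ := by
  obtain ⟨G, hG⟩ := hT
  have hkd : k < d := by omega
  have hfactor : ∀ a b, unfold n T k a b = ∑ u, ∑ v,
      trLeftArc G hkd a u (v ⟨⟨k, hkd⟩, lt_irrefl k⟩) *
        trRightArc G hkd b v (u ⟨⟨0, by omega⟩, hk1⟩) := fun a b =>
    (hG _).trans (trVal_eq_sum_trLeftArc_mul_trRightArc G hk1 hkd a b)
  simpa only [Fintype.card_fin] using Matrix.rank_le_card_mul_card_of_eq_sum_sum _ _ _ _ _ hfactor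
end

section
/- Let T' and T'' be tensors in ℝ^{n_1×⋯×n_d} having TR-representations with cores G_k', G_k'' and TR-ranks (r_0',…,r_d'), (r_0'',…,r_d'') respectively, with r_0' ≥ r_0''. Define cores G_k by: for 2 ≤ k ≤ d−1, G_k(i_k) is the block-diagonal matrix diag(G_k'(i_k), G_k''(i_k)) of size (r_{k−1}'+r_{k−1}'')×(r_k'+r_k''); G_1(i_1) is the r_0'×(r_1'+r_1'') matrix whose left block is G_1'(i_1) and whose right block is G_1''(i_1) stacked above a zero block of size (r_0'−r_0'')×r_1''; and G_d(i_d) is the (r_{d−1}'+r_{d−1}'')×r_0' matrix whose top block is G_d'(i_d) and whose bottom block is G_d''(i_d) concatenated horizontally with a zero block of size r_{d−1}''×(r_0'−r_0''). Then for all indices, Trace(G_1(i_1)·…·G_d(i_d)) = T'(i_1,…,i_d) + T''(i_1,…,i_d); i.e., the cores G_k form a TR-representation of T' + T'' with TR-ranks (r_0', r_1'+r_1'', …, r_{d−1}'+r_{d−1}'', r_0'). -/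
/-- Ranks of the sum of two TR-representations: the end-rank (at position `0`) is
`ρ' 0` (assuming `ρ'' 0 ≤ ρ' 0`), all other ranks are summed. -/
def addRank {d : ℕ} (ρ' ρ'' : Fin d → ℕ) (k : Fin d) : ℕ :=
  if k.val = 0 then ρ' k else ρ' k + ρ'' k

/-- Cores of the sum of two TR-representations: block-diagonal in the middle, with the
special stacking of Theorem `thm:add` for the first core (`k = 0`) and the last core
(`finSucc k = 0`), in the case `ρ'' 0 ≤ ρ' 0`. -/
def addCore {d : ℕ} {n ρ' ρ'' : Fin d → ℕ}
    (G' : ∀ k : Fin d, Fin (n k) → Matrix (Fin (ρ' k)) (Fin (ρ' (finSucc k))) ℝ)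
    (G'' : ∀ k : Fin d, Fin (n k) → Matrix (Fin (ρ'' k)) (Fin (ρ'' (finSucc k))) ℝ)
    (k : Fin d) (i : Fin (n k)) :
    Matrix (Fin (addRank ρ' ρ'' k)) (Fin (addRank ρ' ρ'' (finSucc k))) ℝ :=
  Matrix.of fun x y =>
    if hx : x.val < ρ' k then
      if hy : y.val < ρ' (finSucc k) then G' k i ⟨x.val, hx⟩ ⟨y.val, hy⟩
      else
        if hk : k.val = 0 then
          if hx2 : x.val < ρ'' k then
            G'' k i ⟨x.val, hx2⟩
              ⟨y.val - ρ' (finSucc k), by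
                have hyl := y.isLt
                simp only [addRank] at hyl
                split_ifs at hyl <;> omega⟩
          else 0
        else 0
    else
      if hy : y.val < ρ' (finSucc k) then
        if hk : (finSucc k).val = 0 then
          if hy2 : y.val < ρ'' (finSucc k) then
            G'' k i
              ⟨x.val - ρ' k, by
                have hxl := x.isLt
                simp only [addRank] at hxl
                split_ifs at hxl <;> omega⟩
              ⟨y.val, hy2⟩
          else 0
        else 0
      else
        G'' k i
          ⟨x.val - ρ' k, by
            have hxl := x.isLt
            simp only [addRank] at hxl
            split_ifs at hxl <;> omega⟩
          ⟨y.val - ρ' (finSucc k), by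
            have hyl := y.isLt
            simp only [addRank] at hyl
            split_ifs at hyl <;> omega⟩

/-! Expanding the trace, `trVal` sums over cyclic bond indices `α`. For the cores `addCore G' G''`
a term is nonzero only if `α` stays in the `G'` blocks at every bond or in the `G''` blocks at
every bond: the block-diagonal middle cores cannot switch between the two, and at the shared
bond `0` the zero padding of the first core forces `α 0 < ρ'' 0` on the `G''` route. The two
families of such `α` are disjoint injective images of the bond indices of `G'` and `G''`, on
which the products of the new cores are those of `G'` and of `G''`. -/

section TRAdd

variable {d : ℕ} {n ρ' ρ'' : Fin d → ℕ}
  (G' : ∀ k : Fin d, Fin (n k) → Matrix (Fin (ρ' k)) (Fin (ρ' (finSucc k))) ℝ)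
  (G'' : ∀ k : Fin d, Fin (n k) → Matrix (Fin (ρ'' k)) (Fin (ρ'' (finSucc k))) ℝ)

lemma finSucc_mk {m : ℕ} (hm : m + 1 < d) : finSucc (⟨m, by omega⟩ : Fin d) = ⟨m + 1, hm⟩ :=
  Fin.ext (Nat.mod_eq_of_lt hm)

lemma finSucc_val_of_val_eq_zero (hd : 2 ≤ d) {k : Fin d} (hk : k.val = 0) :
    (finSucc k).val = 1 := by
  simp [finSucc, hk, Nat.mod_eq_of_lt hd]

lemma iff_of_iff_finSucc {P : Fin d → Prop}
    (h : ∀ k : Fin d, k.val ≠ 0 → (finSucc k).val ≠ 0 → (P k ↔ P (finSucc k)))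
    {j k : Fin d} (hj : j.val ≠ 0) (hk : k.val ≠ 0) : P j ↔ P k := by
  have key : ∀ m (hm : m + 1 < d), P ⟨m + 1, hm⟩ ↔ P ⟨1, by omega⟩ := by
    intro m hm
    induction m with
    | zero => rfl
    | succ m ih =>
      have step := h ⟨m + 1, by omega⟩ (by simp) (by simp [finSucc_mk hm])
      rw [finSucc_mk hm] at step
      exact step.symm.trans (ih _)
  obtain ⟨j, hj'⟩ := j
  obtain ⟨k, hk'⟩ := k
  obtain ⟨j, rfl⟩ := Nat.exists_eq_succ_of_ne_zero hj
  obtain ⟨k, rfl⟩ := Nat.exists_eq_succ_of_ne_zero hk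
  exact (key j hj').trans (key k hk').symm

lemma addRank_of_val_eq_zero {k : Fin d} (h : k.val = 0) : addRank ρ' ρ'' k = ρ' k := if_pos h

lemma addRank_of_val_ne_zero {k : Fin d} (h : k.val ≠ 0) : addRank ρ' ρ'' k = ρ' k + ρ'' k :=
  if_neg h

def inlIndex (ρ'' : Fin d → ℕ) (β : ∀ k, Fin (ρ' k)) (k : Fin d) : Fin (addRank ρ' ρ'' k) :=
  ⟨β k, (β k).2.trans_le (by unfold addRank; split_ifs <;> omega)⟩

def inrIndex (ρ' : Fin d → ℕ) (hr : ∀ k : Fin d, k.val = 0 → ρ'' k ≤ ρ' k)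
    (β : ∀ k, Fin (ρ'' k)) (k : Fin d) : Fin (addRank ρ' ρ'' k) :=
  ⟨if k.val = 0 then (β k : ℕ) else ρ' k + β k, by
    unfold addRank
    split_ifs with h
    exacts [(β k).2.trans_le (hr k h), by omega]⟩

lemma inrIndex_val (hr : ∀ k : Fin d, k.val = 0 → ρ'' k ≤ ρ' k) (β : ∀ k, Fin (ρ'' k))
    (k : Fin d) : (inrIndex ρ' hr β k : ℕ) = if k.val = 0 then (β k : ℕ) else ρ' k + β k := rfl

lemma inlIndex_injective : Function.Injective (inlIndex (ρ' := ρ') ρ'') :=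
  fun _ _ h => funext fun k => Fin.ext (Fin.val_eq_of_eq (congrFun h k) :)

lemma inrIndex_injective (hr : ∀ k : Fin d, k.val = 0 → ρ'' k ≤ ρ' k) :
    Function.Injective (inrIndex ρ' hr) := by
  intro β γ h
  funext k
  have hk := congrArg Fin.val (congrFun h k)
  simp only [inrIndex_val] at hk
  split_ifs at hk <;> omega

lemma inlIndex_ne_inrIndex (hd : 2 ≤ d) (hr : ∀ k : Fin d, k.val = 0 → ρ'' k ≤ ρ' k)
    (β : ∀ k, Fin (ρ' k)) (γ : ∀ k, Fin (ρ'' k)) : inlIndex ρ'' β ≠ inrIndex ρ' hr γ := by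
  intro h
  have h1 := congrArg Fin.val (congrFun h ⟨1, hd⟩)
  simp only [inlIndex, inrIndex_val, one_ne_zero, if_false] at h1
  have := (β ⟨1, hd⟩).2
  omega

def addIndex (hr : ∀ k : Fin d, k.val = 0 → ρ'' k ≤ ρ' k) :
    (∀ k, Fin (ρ' k)) ⊕ (∀ k, Fin (ρ'' k)) → ∀ k, Fin (addRank ρ' ρ'' k) :=
  Sum.elim (inlIndex ρ'') (inrIndex ρ' hr)

lemma addIndex_injective (hd : 2 ≤ d) (hr : ∀ k : Fin d, k.val = 0 → ρ'' k ≤ ρ' k) :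
    Function.Injective (addIndex hr) :=
  inlIndex_injective.sumElim (inrIndex_injective hr) (inlIndex_ne_inrIndex hd hr)

lemma exists_inlIndex_eq {α : ∀ k, Fin (addRank ρ' ρ'' k)} (h : ∀ k, (α k : ℕ) < ρ' k) :
    ∃ β, inlIndex ρ'' β = α :=
  ⟨fun k => ⟨α k, h k⟩, rfl⟩

lemma exists_inrIndex_eq (hr : ∀ k : Fin d, k.val = 0 → ρ'' k ≤ ρ' k)
    {α : ∀ k, Fin (addRank ρ' ρ'' k)} (h₀ : ∀ k : Fin d, k.val = 0 → (α k : ℕ) < ρ'' k)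
    (h : ∀ k : Fin d, k.val ≠ 0 → ρ' k ≤ α k) : ∃ β, inrIndex ρ' hr β = α := by
  refine ⟨fun k => ⟨if k.val = 0 then α k else α k - ρ' k, ?_⟩, funext fun k => Fin.ext ?_⟩
  · split_ifs with hk
    · exact h₀ k hk
    · have := (α k).2.trans_eq (addRank_of_val_ne_zero hk)
      have := h k hk
      omega
  · simp only [inrIndex_val]
    split_ifs with hk
    · rfl
    · have := h k hk
      omega

lemma addCore_inlIndex (β : ∀ k, Fin (ρ' k)) (k : Fin d) (i : Fin (n k)) :
    addCore G' G'' k i (inlIndex ρ'' β k) (inlIndex ρ'' β (finSucc k)) =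
      G' k i (β k) (β (finSucc k)) := by
  simp [addCore, inlIndex]

lemma addCore_inrIndex (hd : 2 ≤ d) (hr : ∀ k : Fin d, k.val = 0 → ρ'' k ≤ ρ' k)
    (β : ∀ k, Fin (ρ'' k)) (k : Fin d) (i : Fin (n k)) :
    addCore G' G'' k i (inrIndex ρ' hr β k) (inrIndex ρ' hr β (finSucc k)) =
      G'' k i (β k) (β (finSucc k)) := by
  have := fun hk : k.val = 0 => finSucc_val_of_val_eq_zero hd hk
  have := (β k).2
  have := (β (finSucc k)).2
  have := fun hk => (β k).2.trans_le (hr k hk)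
  have := fun hk => (β (finSucc k)).2.trans_le (hr (finSucc k) hk)
  simp only [addCore, Matrix.of_apply, inrIndex_val]
  split_ifs <;> first | omega | (congr 1 <;> ext <;> simp_all)

lemma lt_iff_lt_of_addCore_ne_zero {k : Fin d} {i : Fin (n k)} {x : Fin (addRank ρ' ρ'' k)}
    {y : Fin (addRank ρ' ρ'' (finSucc k))} (hk : k.val ≠ 0) (hsk : (finSucc k).val ≠ 0)
    (h : addCore G' G'' k i x y ≠ 0) : (x : ℕ) < ρ' k ↔ (y : ℕ) < ρ' (finSucc k) := by
  contrapose! h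
  rcases h with ⟨hx, hy⟩ | ⟨hx, hy⟩
  · simp [addCore, hx, not_lt.2 hy, hk]
  · simp [addCore, not_lt.2 hx, hy, hsk]

lemma lt_of_addCore_ne_zero_of_val_eq_zero {k : Fin d} {i : Fin (n k)}
    {x : Fin (addRank ρ' ρ'' k)} {y : Fin (addRank ρ' ρ'' (finSucc k))} (hk : k.val = 0)
    (hy : ρ' (finSucc k) ≤ y) (h : addCore G' G'' k i x y ≠ 0) : (x : ℕ) < ρ'' k := by
  have hx : (x : ℕ) < ρ' k := x.2.trans_eq (addRank_of_val_eq_zero hk)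
  contrapose! h
  simp [addCore, hx, not_lt.2 hy, hk, not_lt.2 h]

lemma mem_range_addIndex_of_prod_addCore_ne_zero (hd : 2 ≤ d)
    (hr : ∀ k : Fin d, k.val = 0 → ρ'' k ≤ ρ' k) {i : ∀ k, Fin (n k)}
    {α : ∀ k, Fin (addRank ρ' ρ'' k)}
    (h : ∏ k, addCore G' G'' k (i k) (α k) (α (finSucc k)) ≠ 0) :
    α ∈ Set.range (addIndex hr) := by
  have hne k : addCore G' G'' k (i k) (α k) (α (finSucc k)) ≠ 0 :=
    Finset.prod_ne_zero_iff.1 h k (Finset.mem_univ k)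
  let one : Fin d := ⟨1, hd⟩
  have hconst k (hk : k.val ≠ 0) : (α k : ℕ) < ρ' k ↔ (α one : ℕ) < ρ' one :=
    iff_of_iff_finSucc (P := fun k => (α k : ℕ) < ρ' k)
      (fun k hk hsk => lt_iff_lt_of_addCore_ne_zero G' G'' hk hsk (hne k)) hk one_ne_zero
  by_cases h1 : (α one : ℕ) < ρ' one
  · obtain ⟨β, hβ⟩ := exists_inlIndex_eq (α := α) fun k =>
      if hk : k.val = 0 then (α k).2.trans_eq (addRank_of_val_eq_zero hk)
      else (hconst k hk).2 h1
    exact ⟨Sum.inl β, hβ⟩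
  · have hge k (hk : k.val ≠ 0) : ρ' k ≤ α k :=
      not_lt.1 fun hlt => h1 ((hconst k hk).1 hlt)
    have hlt₀ k (hk : k.val = 0) : (α k : ℕ) < ρ'' k :=
      lt_of_addCore_ne_zero_of_val_eq_zero G' G'' hk
        (hge _ (by rw [finSucc_val_of_val_eq_zero hd hk]; exact one_ne_zero)) (hne k)
    obtain ⟨β, hβ⟩ := exists_inrIndex_eq hr hlt₀ hge
    exact ⟨Sum.inr β, hβ⟩

lemma trVal_addCore (hd : 2 ≤ d) (hr : ∀ k : Fin d, k.val = 0 → ρ'' k ≤ ρ' k)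
    (i : ∀ k, Fin (n k)) :
    trVal n (addRank ρ' ρ'') (addCore G' G'') i = trVal n ρ' G' i + trVal n ρ'' G'' i := by
  refine Eq.trans ?_ (Fintype.sum_sum_type (Sum.elim
    (fun β : ∀ k, Fin (ρ' k) => ∏ k, G' k (i k) (β k) (β (finSucc k)))
    (fun β : ∀ k, Fin (ρ'' k) => ∏ k, G'' k (i k) (β k) (β (finSucc k)))))
  refine (Fintype.sum_of_injective (addIndex hr) (addIndex_injective hd hr) _ _
    (fun _ hα => not_not.1 fun h =>
      hα (mem_range_addIndex_of_prod_addCore_ne_zero G' G'' hd hr h)) ?_).symm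
  rintro (β | β)
  · exact Finset.prod_congr rfl fun k _ => (addCore_inlIndex G' G'' β k (i k)).symm
  · exact Finset.prod_congr rfl fun k _ => (addCore_inrIndex G' G'' hd hr β k (i k)).symm

end TRAdd

/-- Addition of two TR-representations with `ρ'' 0 ≤ ρ' 0`: the cores `addCore G' G''`
form a TR-representation of `T' + T''` with TR-ranks
`(ρ' 0, ρ' 1 + ρ'' 1, …, ρ' (d-1) + ρ'' (d-1), ρ' 0)`. -/
theorem tr_add {d : ℕ} (hd : 2 ≤ d) (n ρ' ρ'' : Fin d → ℕ)
    (hr : ρ'' ⟨0, by omega⟩ ≤ ρ' ⟨0, by omega⟩)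
    (G' : ∀ k : Fin d, Fin (n k) → Matrix (Fin (ρ' k)) (Fin (ρ' (finSucc k))) ℝ)
    (G'' : ∀ k : Fin d, Fin (n k) → Matrix (Fin (ρ'' k)) (Fin (ρ'' (finSucc k))) ℝ)
    (T' T'' : (∀ k : Fin d, Fin (n k)) → ℝ)
    (hT' : ∀ i, T' i = trVal n ρ' G' i)
    (hT'' : ∀ i, T'' i = trVal n ρ'' G'' i) :
    ∀ i, trVal n (addRank ρ' ρ'') (addCore G' G'') i = T' i + T'' i := by
  intro i
  have hr₀ : ∀ k : Fin d, k.val = 0 → ρ'' k ≤ ρ' k := fun k hk => by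
    rwa [show k = ⟨0, by omega⟩ from Fin.ext hk]
  rw [hT', hT'', trVal_addCore G' G'' hd hr₀]
end

section
/- Let I, I_1, …, I_M and B_1, …, B_M be finite index sets, let A and Ã be real-valued functions on I × (B_1×⋯×B_M), and for each j = 1,…,M let T_j be a real-valued function on I_j × B_j. Define tensors T and T̃ on I × I_1 × ⋯ × I_M by T(i, i_1, …, i_M) = Σ_{(β_1,…,β_M) ∈ B_1×⋯×B_M} A(i, β_1,…,β_M) · ∏_{j=1}^M T_j(i_j, β_j), and similarly T̃ with Ã in place of A. Then ‖T − T̃‖_F ≤ ‖A − Ã‖_F · ∏_{j=1}^M ‖T_j‖_F, where ‖·‖_F denotes the ℓ² norm over all entries of the respective array. -/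
/-- Error propagation for graph-based tensor formats (Theorem `thm:error_prop`,
in coordinates): if `T(i, i₁, …, i_M) = ∑_β A(i, β) ∏_j T_j(i_j, β_j)` and likewise
for `T̃` with `Ã` in place of `A`, then
`‖T − T̃‖_F ≤ ‖A − Ã‖_F ∏_j ‖T_j‖_F`. -/
theorem graph_error_propagation {M : ℕ} {ι : Type*} [Fintype ι]
    {I : Fin M → Type*} {B : Fin M → Type*}
    [∀ j, Fintype (I j)] [∀ j, Fintype (B j)]
    (A A' : ι → (∀ j : Fin M, B j) → ℝ)
    (Tc : ∀ j : Fin M, I j → B j → ℝ)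
    (T T' : ι → (∀ j : Fin M, I j) → ℝ)
    (hT : ∀ i ii, T i ii = ∑ β : ∀ j : Fin M, B j, A i β * ∏ j : Fin M, Tc j (ii j) (β j))
    (hT' : ∀ i ii, T' i ii = ∑ β : ∀ j : Fin M, B j, A' i β * ∏ j : Fin M, Tc j (ii j) (β j)) :
    Real.sqrt (∑ i : ι, ∑ ii : ∀ j : Fin M, I j, (T i ii - T' i ii) ^ 2) ≤
      Real.sqrt (∑ i : ι, ∑ β : ∀ j : Fin M, B j, (A i β - A' i β) ^ 2) *
        ∏ j : Fin M, Real.sqrt (∑ x : I j, ∑ y : B j, (Tc j x y) ^ 2) := by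
  set S : Fin M → ℝ := fun j => ∑ x : I j, ∑ y : B j, (Tc j x y) ^ 2 with hS
  have hSnn : ∀ j, 0 ≤ S j := fun j =>
    Finset.sum_nonneg fun _ _ => Finset.sum_nonneg fun _ _ => sq_nonneg _
  -- the squared version of the inequality
  have hPsum : ∑ ii : ∀ j : Fin M, I j, ∑ β : ∀ j : Fin M, B j,
      (∏ j : Fin M, Tc j (ii j) (β j)) ^ 2 = ∏ j : Fin M, S j := by
    have h1 : ∀ ii : ∀ j : Fin M, I j,
        ∑ β : ∀ j : Fin M, B j, (∏ j : Fin M, Tc j (ii j) (β j)) ^ 2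
          = ∏ j : Fin M, ∑ y : B j, Tc j (ii j) y ^ 2 := by
      intro ii
      rw [Fintype.prod_sum fun j y => Tc j (ii j) y ^ 2]
      exact Finset.sum_congr rfl fun β _ => (Finset.prod_pow _ _ _).symm
    simp only [h1, hS]
    rw [Fintype.prod_sum fun j x => ∑ y : B j, Tc j x y ^ 2]
  have key : ∑ i : ι, ∑ ii : ∀ j : Fin M, I j, (T i ii - T' i ii) ^ 2 ≤
      (∑ i : ι, ∑ β : ∀ j : Fin M, B j, (A i β - A' i β) ^ 2) * ∏ j : Fin M, S j := by
    have step : ∀ i : ι, ∑ ii : ∀ j : Fin M, I j, (T i ii - T' i ii) ^ 2 ≤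
        (∑ β : ∀ j : Fin M, B j, (A i β - A' i β) ^ 2) * ∏ j : Fin M, S j := by
      intro i
      have hdiff : ∀ ii, T i ii - T' i ii =
          ∑ β : ∀ j : Fin M, B j, (A i β - A' i β) * ∏ j : Fin M, Tc j (ii j) (β j) := by
        intro ii
        rw [hT, hT', ← Finset.sum_sub_distrib]
        exact Finset.sum_congr rfl fun β _ => (sub_mul _ _ _).symm
      calc ∑ ii : ∀ j : Fin M, I j, (T i ii - T' i ii) ^ 2
          ≤ ∑ ii : ∀ j : Fin M, I j, (∑ β : ∀ j : Fin M, B j, (A i β - A' i β) ^ 2) *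
              ∑ β : ∀ j : Fin M, B j, (∏ j : Fin M, Tc j (ii j) (β j)) ^ 2 := by
            refine Finset.sum_le_sum fun ii _ => ?_
            rw [hdiff ii]
            exact Finset.sum_mul_sq_le_sq_mul_sq _ _ _
        _ = (∑ β : ∀ j : Fin M, B j, (A i β - A' i β) ^ 2) * ∏ j : Fin M, S j := by
            rw [← Finset.mul_sum, hPsum]
    calc ∑ i : ι, ∑ ii : ∀ j : Fin M, I j, (T i ii - T' i ii) ^ 2
        ≤ ∑ i : ι, (∑ β : ∀ j : Fin M, B j, (A i β - A' i β) ^ 2) * ∏ j : Fin M, S j :=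
          Finset.sum_le_sum fun i _ => step i
      _ = (∑ i : ι, ∑ β : ∀ j : Fin M, B j, (A i β - A' i β) ^ 2) * ∏ j : Fin M, S j := by
          rw [Finset.sum_mul]
  calc Real.sqrt (∑ i : ι, ∑ ii : ∀ j : Fin M, I j, (T i ii - T' i ii) ^ 2)
      ≤ Real.sqrt ((∑ i : ι, ∑ β : ∀ j : Fin M, B j, (A i β - A' i β) ^ 2) *
          ∏ j : Fin M, S j) := Real.sqrt_le_sqrt key
    _ = Real.sqrt (∑ i : ι, ∑ β : ∀ j : Fin M, B j, (A i β - A' i β) ^ 2) *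
          Real.sqrt (∏ j : Fin M, S j) := Real.sqrt_mul
            (Finset.sum_nonneg fun _ _ => Finset.sum_nonneg fun _ _ => sq_nonneg _) _
    _ = Real.sqrt (∑ i : ι, ∑ β : ∀ j : Fin M, B j, (A i β - A' i β) ^ 2) *
          ∏ j : Fin M, Real.sqrt (S j) := by
        congr 1
        induction (Finset.univ : Finset (Fin M)) using Finset.cons_induction with
        | empty => simp
        | cons a s ha ih =>
          rw [Finset.prod_cons, Finset.prod_cons,
            Real.sqrt_mul (hSnn a), ih]
end

section
/- Let T ∈ ℝ^{n_1×⋯×n_d} have a TR-representation with cores G_1,…,G_d and TR-ranks (r_0,…,r_d), r_d = r_0, and fix k with 1 ≤ k ≤ d. For 1 ≤ ℓ ≤ r_k define the tensor T_ℓ by T_ℓ(i_1,…,i_d) = (G_{k+1}(i_{k+1}) · … · G_d(i_d) · G_1(i_1) · … · G_k(i_k))_{ℓ,ℓ}, the (ℓ,ℓ) entry of the cyclically reordered product (equivalently, the contraction of the cores with the k-th link index α_k fixed to ℓ). Then T(i_1,…,i_d) = Σ_{ℓ=1}^{r_k} T_ℓ(i_1,…,i_d) for all indices, each T_ℓ admits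 a TR-representation whose rank on the edge between vertices k and k+1 equals 1, and consequently T admits a TR-representation in which the rank on that edge equals 1 and every other edge rank is at most r_k times the original edge rank. -/
namespace TRdel

lemma fin_cast_self {m : ℕ} (h : m = m) (a : Fin m) : Fin.cast h a = a := rfl

lemma finSucc_ne {d : ℕ} (hd : 2 ≤ d) (k : Fin d) : finSucc k ≠ k := by
  intro h
  have h' : (k.val + 1) % d = k.val := congrArg Fin.val h
  have hk := k.isLt
  rcases Nat.lt_or_ge (k.val + 1) d with h1 | h1
  · rw [Nat.mod_eq_of_lt h1] at h'; omega
  · have hkd : k.val + 1 = d := by omega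
    rw [hkd, Nat.mod_self] at h'; omega

lemma chain {d : ℕ} (hd : 2 ≤ d) (k : Fin d) {X : Type*} (L : ∀ j : Fin d, j ≠ k → X)
    (hstep : ∀ v (hv : v ≠ k) (hsv : finSucc v ≠ k), L v hv = L (finSucc v) hsv) :
    ∀ j (h : j ≠ k), L j h = L (finSucc k) (finSucc_ne hd k) := by
  have hd0 : 0 < d := by omega
  have Lc : ∀ (j j' : Fin d) (hj : j ≠ k) (hj' : j' ≠ k), j = j' → L j hj = L j' hj' := by
    intro j j' hj hj' h; subst h; rfl
  set e : ℕ → Fin d := fun m => ⟨(k.val + m) % d, Nat.mod_lt _ hd0⟩ with he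
  have hsucc : ∀ m, finSucc (e m) = e (m + 1) := by
    intro m; apply Fin.ext
    show ((k.val + m) % d + 1) % d = (k.val + (m + 1)) % d
    rw [Nat.mod_add_mod, Nat.add_assoc]
  have hne_e : ∀ m, 1 ≤ m → m ≤ d - 1 → e m ≠ k := by
    intro m h1 h2 heq
    have hval : (k.val + m) % d = k.val := congrArg Fin.val heq
    have hk := k.isLt
    rcases Nat.lt_or_ge (k.val + m) d with hlt | hge
    · rw [Nat.mod_eq_of_lt hlt] at hval; omega
    · have h2d : k.val + m - d < d := by omega
      rw [Nat.mod_eq_sub_mod hge, Nat.mod_eq_of_lt h2d] at hval; omega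
  have claim : ∀ m (h1 : 1 ≤ m) (h2 : m ≤ d - 1),
      L (e m) (hne_e m h1 h2) = L (e 1) (hne_e 1 le_rfl (by omega)) := by
    intro m
    induction m with
    | zero => intro h1 _; exact absurd h1 (by omega)
    | succ m ih =>
      intro h1 h2
      rcases Nat.eq_zero_or_pos m with hm | hm
      · subst hm; exact Lc _ _ _ _ rfl
      · have h2' : m ≤ d - 1 := by omega
        have hstep' := hstep (e m) (hne_e m hm h2')
          (by rw [hsucc]; exact hne_e (m + 1) (by omega) h2)
        calc L (e (m + 1)) (hne_e (m + 1) h1 h2)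
            = L (finSucc (e m)) (by rw [hsucc]; exact hne_e (m + 1) (by omega) h2) :=
              Lc _ _ _ _ (hsucc m).symm
          _ = L (e m) (hne_e m hm h2') := hstep'.symm
          _ = L (e 1) (hne_e 1 le_rfl (by omega)) := ih hm h2'
  intro j h
  have hk := k.isLt; have hj := j.isLt
  have hjk : j.val ≠ k.val := fun hh => h (Fin.ext hh)
  obtain ⟨m, hm1, hm2, hme⟩ : ∃ m, 1 ≤ m ∧ m ≤ d - 1 ∧ e m = j := by
    rcases Nat.lt_or_ge k.val j.val with hlt | hge
    · exact ⟨j.val - k.val, by omega, by omega, Fin.ext (by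
        show (k.val + (j.val - k.val)) % d = j.val
        have hh : k.val + (j.val - k.val) = j.val := by omega
        rw [hh, Nat.mod_eq_of_lt hj])⟩
    · exact ⟨j.val + d - k.val, by omega, by omega, Fin.ext (by
        show (k.val + (j.val + d - k.val)) % d = j.val
        have hh : k.val + (j.val + d - k.val) = j.val + d := by omega
        rw [hh, Nat.add_mod_right, Nat.mod_eq_of_lt hj])⟩
  exact (Lc _ _ h (hne_e m hm1 hm2) hme.symm).trans
    ((claim m hm1 hm2).trans (Lc _ _ _ _ rfl))

end TRdel

section Part2

variable {d : ℕ}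

def rho1 (ρ : Fin d → ℕ) (k : Fin d) : Fin d → ℕ := fun j => if j = k then 1 else ρ j

lemma rho1_ne (ρ : Fin d → ℕ) (k : Fin d) {j : Fin d} (h : j ≠ k) : rho1 ρ k j = ρ j := if_neg h

lemma rho1_eq (ρ : Fin d → ℕ) (k : Fin d) : rho1 ρ k k = 1 := if_pos rfl

def u (ρ : Fin d → ℕ) (k : Fin d) (ℓ : Fin (ρ k)) (j : Fin d) (a : Fin (rho1 ρ k j)) :
    Fin (ρ j) :=
  if h : j = k then Fin.cast (congrArg ρ h).symm ℓ else Fin.cast (rho1_ne ρ k h) a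

lemma sum_fix (ρ : Fin d → ℕ) (k : Fin d) (ℓ : Fin (ρ k)) (P : (∀ j, Fin (ρ j)) → ℝ) :
    (∑ α : ∀ j, Fin (ρ j), if α k = ℓ then P α else 0)
      = ∑ β : ∀ j, Fin (rho1 ρ k j), P (fun j => u ρ k ℓ j (β j)) := by
  classical
  rw [← Finset.sum_filter]
  have key : ∀ α ∈ Finset.univ.filter (fun α : ∀ j, Fin (ρ j) => α k = ℓ),
      (fun j => u ρ k ℓ j
        (if h : j = k then Fin.cast (by rw [h, rho1_eq]) (0 : Fin 1)
         else Fin.cast (rho1_ne ρ k h).symm (α j))) = α := by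
    intro α hα
    have hαk : α k = ℓ := (Finset.mem_filter.mp hα).2
    funext j
    by_cases h : j = k
    · subst h
      simp only [u, dif_pos rfl]
      exact Fin.ext (by simp [← hαk])
    · simp only [u, dif_neg h]
      exact Fin.ext (by simp)
  refine Finset.sum_nbij'
    (fun α j => if h : j = k then Fin.cast (by rw [h, rho1_eq]) (0 : Fin 1)
        else Fin.cast (rho1_ne ρ k h).symm (α j))
    (fun β j => u ρ k ℓ j (β j)) ?_ ?_ ?_ ?_ ?_
  · intro α _; exact Finset.mem_univ _
  · intro β _
    refine Finset.mem_filter.mpr ⟨Finset.mem_univ _, ?_⟩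
    simp only [u, dif_pos rfl]
    exact Fin.ext (by simp)
  · intro α hα; exact key α hα
  · intro β _
    funext j
    by_cases h : j = k
    · subst h
      have hlt : (β j).val < 1 := by
        have h1 := (β j).isLt
        have h2 := rho1_eq ρ j
        omega
      exact Fin.ext (by simp; omega)
    · simp only [dif_neg h, u]
      exact Fin.ext (by simp)
  · intro α hα
    rw [key α hα]

end Part2

section Part3

variable {d : ℕ}

def rho2 (ρ : Fin d → ℕ) (k : Fin d) : Fin d → ℕ := fun j => if j = k then 1 else ρ k * ρ j

lemma rho2_ne (ρ : Fin d → ℕ) (k : Fin d) {j : Fin d} (h : j ≠ k) :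
    rho2 ρ k j = ρ k * ρ j := if_neg h

lemma rho2_eq (ρ : Fin d → ℕ) (k : Fin d) : rho2 ρ k k = 1 := if_pos rfl

def dec (ρ : Fin d → ℕ) (k : Fin d) (j : Fin d) (h : j ≠ k) (a : Fin (rho2 ρ k j)) :
    Fin (ρ k) × Fin (ρ j) :=
  finProdFinEquiv.symm (Fin.cast (rho2_ne ρ k h) a)

def enc (ρ : Fin d → ℕ) (k : Fin d) (j : Fin d) (h : j ≠ k) (p : Fin (ρ k) × Fin (ρ j)) :
    Fin (rho2 ρ k j) :=
  Fin.cast (rho2_ne ρ k h).symm (finProdFinEquiv p)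

lemma dec_enc (ρ : Fin d → ℕ) (k : Fin d) (j : Fin d) (h h' : j ≠ k)
    (p : Fin (ρ k) × Fin (ρ j)) : dec ρ k j h (enc ρ k j h' p) = p := by
  unfold dec enc
  rw [show Fin.cast (rho2_ne ρ k h) (Fin.cast (rho2_ne ρ k h').symm (finProdFinEquiv p))
      = finProdFinEquiv p from Fin.ext (by simp)]
  exact Equiv.symm_apply_apply _ _

lemma enc_dec (ρ : Fin d → ℕ) (k : Fin d) (j : Fin d) (h h' : j ≠ k)
    (a : Fin (rho2 ρ k j)) : enc ρ k j h (dec ρ k j h' a) = a := by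
  unfold dec enc
  rw [Equiv.apply_symm_apply]
  exact Fin.ext (by simp)

def G2 (hd : 2 ≤ d) (n ρ : Fin d → ℕ)
    (G : ∀ j : Fin d, Fin (n j) → Matrix (Fin (ρ j)) (Fin (ρ (finSucc j))) ℝ) (k : Fin d) :
    ∀ j : Fin d, Fin (n j) → Matrix (Fin (rho2 ρ k j)) (Fin (rho2 ρ k (finSucc j))) ℝ :=
  fun j x => Matrix.of fun r c =>
    if hj : j = k then
      G k (Fin.cast (congrArg n hj) x)
        (dec ρ k (finSucc k) (TRdel.finSucc_ne hd k) (Fin.cast (by rw [hj]) c)).1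
        (dec ρ k (finSucc k) (TRdel.finSucc_ne hd k) (Fin.cast (by rw [hj]) c)).2
    else if hs : finSucc j = k then
      G j x (dec ρ k j hj r).2 (Fin.cast (congrArg ρ hs).symm (dec ρ k j hj r).1)
    else
      if (dec ρ k j hj r).1 = (dec ρ k (finSucc j) hs c).1 then
        G j x (dec ρ k j hj r).2 (dec ρ k (finSucc j) hs c).2
      else 0

def Psi (ρ : Fin d → ℕ) (k : Fin d) (α : ∀ j, Fin (ρ j)) : ∀ j, Fin (rho2 ρ k j) :=
  fun j => if h : j = k then Fin.cast (by rw [h, rho2_eq]) (0 : Fin 1)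
           else enc ρ k j h (α k, α j)

def PsiInv (hd : 2 ≤ d) (ρ : Fin d → ℕ) (k : Fin d) (β : ∀ j, Fin (rho2 ρ k j)) :
    ∀ j, Fin (ρ j) :=
  fun j => if h : j = k then
      Fin.cast (congrArg ρ h).symm
        (dec ρ k (finSucc k) (TRdel.finSucc_ne hd k) (β (finSucc k))).1
    else (dec ρ k j h (β j)).2

lemma Psi_ne (ρ : Fin d → ℕ) (k : Fin d) (α : ∀ j, Fin (ρ j)) {j : Fin d} (h : j ≠ k) :
    Psi ρ k α j = enc ρ k j h (α k, α j) := by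
  simp only [Psi]; exact dif_neg h

lemma PsiInv_ne (hd : 2 ≤ d) (ρ : Fin d → ℕ) (k : Fin d) (β : ∀ j, Fin (rho2 ρ k j))
    {j : Fin d} (h : j ≠ k) : PsiInv hd ρ k β j = (dec ρ k j h (β j)).2 := by
  simp only [PsiInv]; exact dif_neg h

lemma PsiInv_self (hd : 2 ≤ d) (ρ : Fin d → ℕ) (k : Fin d) (β : ∀ j, Fin (rho2 ρ k j)) :
    PsiInv hd ρ k β k = (dec ρ k (finSucc k) (TRdel.finSucc_ne hd k) (β (finSucc k))).1 := by
  simp only [PsiInv]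
  rw [dif_pos trivial]
  exact Fin.ext (by simp)

lemma trVal_G2 (hd : 2 ≤ d) (n ρ : Fin d → ℕ)
    (G : ∀ j : Fin d, Fin (n j) → Matrix (Fin (ρ j)) (Fin (ρ (finSucc j))) ℝ) (k : Fin d)
    (i : ∀ j : Fin d, Fin (n j)) :
    trVal n (rho2 ρ k) (G2 hd n ρ G k) i = trVal n ρ G i := by
  classical
  have hne := TRdel.finSucc_ne hd k
  unfold trVal
  set F : (∀ j, Fin (rho2 ρ k j)) → ℝ :=
    fun β => ∏ j, G2 hd n ρ G k j (i j) (β j) (β (finSucc j)) with hF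
  set S : Finset (∀ j, Fin (rho2 ρ k j)) :=
    Finset.univ.filter (fun β => ∀ j, ∀ h : j ≠ k,
      (dec ρ k j h (β j)).1 = (dec ρ k (finSucc k) hne (β (finSucc k))).1) with hS
  have hzero : ∀ β, β ∉ S → F β = 0 := by
    intro β hβ
    by_cases hgood : ∀ v (hv : v ≠ k) (hsv : finSucc v ≠ k),
        (dec ρ k v hv (β v)).1 = (dec ρ k (finSucc v) hsv (β (finSucc v))).1
    · exact absurd (Finset.mem_filter.mpr ⟨Finset.mem_univ _,
        TRdel.chain hd k (fun j h => (dec ρ k j h (β j)).1) hgood⟩) hβ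
    · push_neg at hgood
      obtain ⟨v, hv, hsv, hbad⟩ := hgood
      refine Finset.prod_eq_zero (Finset.mem_univ v) ?_
      show G2 hd n ρ G k v (i v) (β v) (β (finSucc v)) = 0
      simp only [G2, Matrix.of_apply, dif_neg hv, dif_neg hsv]
      exact if_neg hbad
  have hsub : ∑ β : ∀ j, Fin (rho2 ρ k j), F β = ∑ β ∈ S, F β :=
    (Finset.sum_subset (Finset.subset_univ S) (fun β _ hβ => hzero β hβ)).symm
  rw [hsub]
  have hmem : ∀ α : ∀ j, Fin (ρ j), Psi ρ k α ∈ S := by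
    intro α
    refine Finset.mem_filter.mpr ⟨Finset.mem_univ _, ?_⟩
    intro j h
    rw [Psi_ne ρ k α h, Psi_ne ρ k α hne, dec_enc, dec_enc]
  have hright : ∀ α : ∀ j, Fin (ρ j), PsiInv hd ρ k (Psi ρ k α) = α := by
    intro α
    funext j
    by_cases h : j = k
    · subst h
      rw [PsiInv_self, Psi_ne ρ j α hne, dec_enc]
    · rw [PsiInv_ne hd ρ k _ h, Psi_ne ρ k α h, dec_enc]
  have hleft : ∀ β ∈ S, Psi ρ k (PsiInv hd ρ k β) = β := by
    intro β hβ
    have hβ' := (Finset.mem_filter.mp hβ).2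
    funext j
    by_cases h : j = k
    · subst h
      have h1 := (β j).isLt
      have h2 := rho2_eq ρ j
      simp only [Psi, dif_pos rfl]
      exact Fin.ext (by simp; omega)
    · rw [Psi_ne ρ k _ h, PsiInv_self, PsiInv_ne hd ρ k β h, ← hβ' j h, Prod.mk.eta,
        enc_dec]
  have hprod : ∀ α : ∀ j, Fin (ρ j),
      F (Psi ρ k α) = ∏ j, G j (i j) (α j) (α (finSucc j)) := by
    intro α
    refine Finset.prod_congr rfl ?_
    intro j _
    by_cases hj : j = k
    · subst hj
      show G2 hd n ρ G j j (i j) (Psi ρ j α j) (Psi ρ j α (finSucc j))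
          = G j (i j) (α j) (α (finSucc j))
      simp only [G2, Matrix.of_apply]
      rw [dif_pos trivial]
      simp only [TRdel.fin_cast_self]
      rw [Psi_ne ρ j α hne, dec_enc]
    · by_cases hs : finSucc j = k
      · subst hs
        show G2 hd n ρ G (finSucc j) j (i j) (Psi ρ (finSucc j) α j)
            (Psi ρ (finSucc j) α (finSucc j)) = G j (i j) (α j) (α (finSucc j))
        simp only [G2, Matrix.of_apply]
        rw [dif_neg hj, dif_pos trivial, Psi_ne ρ (finSucc j) α hj, dec_enc]
        simp only [TRdel.fin_cast_self]
      · show G2 hd n ρ G k j (i j) (Psi ρ k α j) (Psi ρ k α (finSucc j))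
            = G j (i j) (α j) (α (finSucc j))
        simp only [G2, Matrix.of_apply]
        rw [dif_neg hj, dif_neg hs, Psi_ne ρ k α hj, Psi_ne ρ k α hs, dec_enc, dec_enc,
          if_pos rfl]
  refine Finset.sum_nbij' (PsiInv hd ρ k) (Psi ρ k) (fun β _ => Finset.mem_univ _)
    (fun α _ => hmem α) (fun β hβ => hleft β hβ) (fun α _ => hright α) ?_
  intro β hβ
  rw [← hprod (PsiInv hd ρ k β), hleft β hβ]

end Part3

/-- Edge deletion (Algorithm `alg:delete_edge` and Theorem `thm:correct_delete`):
fixing the link index `α_k = ℓ` defines tensors `T_ℓ` which sum to `T`, each of which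
has a TR-representation with rank `1` on the edge carrying `α_k`; consequently `T`
itself admits a TR-representation in which that edge has rank `1` and every other
edge rank is at most `ρ k` times the original one. -/
theorem tr_edge_deletion {d : ℕ} (hd : 2 ≤ d) (n ρ : Fin d → ℕ)
    (G : ∀ k : Fin d, Fin (n k) → Matrix (Fin (ρ k)) (Fin (ρ (finSucc k))) ℝ)
    (T : (∀ k : Fin d, Fin (n k)) → ℝ)
    (hT : ∀ i, T i = trVal n ρ G i)
    (k : Fin d)
    (Tl : Fin (ρ k) → (∀ j : Fin d, Fin (n j)) → ℝ)
    (hTl : ∀ ℓ i, Tl ℓ i =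
      ∑ α : ∀ j : Fin d, Fin (ρ j),
        if α k = ℓ then ∏ j : Fin d, G j (i j) (α j) (α (finSucc j)) else 0) :
    (∀ i, T i = ∑ ℓ : Fin (ρ k), Tl ℓ i) ∧
    (∀ ℓ : Fin (ρ k), ∃ ρ' : Fin d → ℕ, ρ' k = 1 ∧ IsTRRank n ρ' (Tl ℓ)) ∧
    (∃ ρ'' : Fin d → ℕ, ρ'' k = 1 ∧ (∀ j : Fin d, j ≠ k → ρ'' j ≤ ρ k * ρ j) ∧
      IsTRRank n ρ'' T) := by
  classical
  refine ⟨?_, ?_, ?_⟩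
  · intro i
    have hsw : ∑ ℓ : Fin (ρ k), Tl ℓ i
        = ∑ α : ∀ j, Fin (ρ j), ∑ ℓ : Fin (ρ k),
            if α k = ℓ then ∏ j, G j (i j) (α j) (α (finSucc j)) else 0 := by
      rw [← Finset.sum_comm]
      exact Finset.sum_congr rfl (fun ℓ _ => hTl ℓ i)
    rw [hT, hsw]
    unfold trVal
    refine Finset.sum_congr rfl (fun α _ => ?_)
    simp
  · intro ℓ
    refine ⟨rho1 ρ k, rho1_eq ρ k,
      fun j x => Matrix.of fun a b => G j x (u ρ k ℓ j a) (u ρ k ℓ (finSucc j) b),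
      fun i => ?_⟩
    rw [hTl, sum_fix ρ k ℓ (fun α => ∏ j, G j (i j) (α j) (α (finSucc j)))]
    rfl
  · exact ⟨rho2 ρ k, rho2_eq ρ k, fun j hj => le_of_eq (rho2_ne ρ k hj),
      G2 hd n ρ G k, fun i => (hT i).trans (trVal_G2 hd n ρ G k i).symm⟩
end
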